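/- arXiv:0810.0328 — 2 statements merged into one kernel-verified Lean document; each statement's English description precedes it below -/
import Mathlib

section
/- Correctness of the VSR-AA-RPK protocol (receiver-public-key variant): let p be a prime, let I be a finite index set, let h, k : I → ZMod p be arbitrary functions, let K ∈ ZMod p, let g ∈ (ZMod p)ˣ, let s ∈ ℕ be the receiver's private key with public key PK = g^s, and let r : I → ℕ. Define u i = g^(r i), the tag t i = (K · h i + k i) · ((PK^(r i) : (ZMod p)ˣ) : ZMod p), and the receiver's unblinding value v i = (u i)^s ∈ (ZMod p)ˣ. Then v i = PK^(r i) for every i, and Σ_{i ∈ I} t i · ((v i)⁻¹ : ZMod p) = (Σ_{i ∈ I} k i) + K · (Σ_{i ∈ I} h i), i.e., the receiver's proof x = Σ_{i ∈ I} h i, y = Σ_{i ∈ I} t i · (v i)⁻¹ passes the sender's verification test. -/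
/-- Correctness of the VSR-AA-RPK protocol: with ElGamal-style blinding
`t i = (K * h i + k i) * PK ^ (r i)` where `PK = g ^ s`, the receiver's
unblinding values `v i = (u i) ^ s` with `u i = g ^ (r i)` satisfy
`v i = PK ^ (r i)`, and the unblinded proof passes verification. -/
theorem vsr_aa_rpk_correctness (p : ℕ) (hp : p.Prime) {ι : Type*} (I : Finset ι)
    (h k : ι → ZMod p) (K : ZMod p) (g : (ZMod p)ˣ) (s : ℕ)
    (PK : (ZMod p)ˣ) (hPK : PK = g ^ s)
    (r : ι → ℕ) (u : ι → (ZMod p)ˣ) (hu : ∀ i, u i = g ^ (r i))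
    (t : ι → ZMod p)
    (ht : ∀ i, t i = (K * h i + k i) * ((PK ^ (r i) : (ZMod p)ˣ) : ZMod p))
    (v : ι → (ZMod p)ˣ) (hv : ∀ i, v i = (u i) ^ s) :
    (∀ i, v i = PK ^ (r i)) ∧
      (∑ i ∈ I, t i * (((v i)⁻¹ : (ZMod p)ˣ) : ZMod p)) =
        (∑ i ∈ I, k i) + K * (∑ i ∈ I, h i) := by
  have hveq : ∀ i, v i = PK ^ (r i) := by
    intro i
    rw [hv, hu, hPK, ← pow_mul, ← pow_mul, Nat.mul_comm]
  refine ⟨hveq, ?_⟩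
  have : ∀ i, t i * (((v i)⁻¹ : (ZMod p)ˣ) : ZMod p) = K * h i + k i := by
    intro i
    rw [ht, hveq, mul_assoc, ← Units.val_mul, mul_inv_cancel, Units.val_one, mul_one]
  simp only [this]
  rw [Finset.sum_add_distrib, ← Finset.mul_sum, add_comm]
end

section
/- Conditional probability of guessing the genuine key pair: let p be a prime, let x, y ∈ ZMod p, and let (k₀, k₀') ∈ ZMod p × ZMod p satisfy y = k₀' + k₀·x. Under the probability measure induced by the uniform probability mass function on (ZMod p) × (ZMod p), the conditional probability of the singleton event {(k₀, k₀')} given the event A = {(k, k') : k' + k·x = y} equals 1/p. -/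
open scoped ENNReal

/-- Conditional probability of guessing the genuine key pair: under the uniform
distribution on key pairs, the conditional probability of the singleton
`{(k₀, k₀')}` given the event that the keys are consistent with `(x, y)`
equals `1 / p`. -/
theorem vsr_aa_conditional_guess_probability (p : ℕ) [Fact p.Prime]
    [MeasurableSpace (ZMod p × ZMod p)] [MeasurableSingletonClass (ZMod p × ZMod p)]
    (x y : ZMod p) (k₀ k₀' : ZMod p) (hk : y = k₀' + k₀ * x) :
    ProbabilityTheory.cond (PMF.uniformOfFintype (ZMod p × ZMod p)).toMeasure
        {q : ZMod p × ZMod p | q.2 + q.1 * x = y} {(k₀, k₀')} = 1 / p := by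
  have hp : (p : ℕ) ≠ 0 := (Fact.out (p := p.Prime)).ne_zero
  set A : Set (ZMod p × ZMod p) := {q : ZMod p × ZMod p | q.2 + q.1 * x = y} with hA
  have hAm : MeasurableSet A := (Set.toFinite A).measurableSet
  have hmem : (k₀, k₀') ∈ A := by simp [hA, hk.symm]
  have hinter : A ∩ {(k₀, k₀')} = {(k₀, k₀')} := by
    simp [Set.inter_eq_right, hmem]
  have e : ZMod p ≃ A :=
    { toFun := fun k => ⟨(k, y - k * x), by simp [hA]⟩
      invFun := fun q => q.1.1
      left_inv := fun k => rfl
      right_inv := fun q => by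
        obtain ⟨⟨a, b⟩, hq⟩ := q
        simp only [hA, Set.mem_setOf_eq] at hq
        simp [Subtype.ext_iff, Prod.ext_iff, ← hq] }
  have hcardA : ∀ (inst : Fintype A), @Fintype.card A inst = p := fun inst =>
    ((@Fintype.card_congr _ _ _ inst e).symm).trans (ZMod.card p)
  have hcard2 : Fintype.card (ZMod p × ZMod p) = p * p := by
    simp [ZMod.card]
  have hp' : (p : ℝ≥0∞) ≠ 0 := by exact_mod_cast Nat.cast_ne_zero.mpr hp
  have hpt : (p : ℝ≥0∞) ≠ ⊤ := ENNReal.natCast_ne_top p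
  have key : ∀ a : ℝ≥0∞, (p : ℝ≥0∞) * a / ((p : ℝ≥0∞) * p) = a / p := fun a =>
    ENNReal.mul_div_mul_left a p hp' hpt
  have hμA : (PMF.uniformOfFintype (ZMod p × ZMod p)).toMeasure A
      = 1 / (p : ℝ≥0∞) := by
    rw [PMF.toMeasure_uniformOfFintype_apply A hAm, hcardA, hcard2]
    push_cast
    rw [← key 1, mul_one]
  have hμs : (PMF.uniformOfFintype (ZMod p × ZMod p)).toMeasure {(k₀, k₀')}
      = 1 / ((p : ℝ≥0∞) * p) := by
    rw [PMF.toMeasure_uniformOfFintype_apply _ (MeasurableSet.singleton _), hcard2]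
    push_cast
    simp
  rw [ProbabilityTheory.cond_apply hAm, hinter, hμA, hμs]
  rw [one_div, inv_inv, one_div, ← div_eq_mul_inv]
  nth_rewrite 1 [← mul_one (p : ℝ≥0∞)]
  rw [key 1, one_div]
end
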